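/- arXiv:math/0111325 — 3 statements merged into one kernel-verified Lean document; each statement's English description precedes it below -/
import Mathlib

section
/- With K = Σ_{i,j} (-1)^{[i][j]} θ_i θ_j E_{j̄ ī} ⊗ E_{ji}, the operators P and K satisfy PK = KP = θ₀ K. -/
/-!
Left multiplication by `P` swaps the tensor factors of the row index, right multiplication those of
the column index. `K` is supported on pairs `(ī, i)`, where `[ī] = [i]` so the graded signs of the
products cancel, and the swap `(ī, i) ↦ (i, ī)` multiplies the coefficient by
`(-1)^[i] θ_ī / θ_i`. This factor is `θ₀`: for `i < M` because `(-1)^[i] = θ₀` and `θ_ī = θ_i`,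
for `i ≥ M` because `(-1)^[i] = -θ₀` and, `N` being even, `θ_ī = -θ_i`.
-/

open Matrix BigOperators Finset

noncomputable section

namespace OspYangian

variable (M N : ℕ) (θ₀ : ℤ)

/-- The grading exponent `[i] ∈ {0,1}`, defined so that `(-1)^[i] = θ₀` for `i < M`
and `(-1)^[i] = -θ₀` for `M ≤ i < M+N` (0-indexed). -/
def gr (i : Fin (M + N)) : ℕ :=
  if (i : ℕ) < M then (if θ₀ = 1 then 0 else 1) else (if θ₀ = 1 then 1 else 0)

/-- The sign `θ_i`: `+1` for `i < M + N/2`, `-1` otherwise (0-indexed). -/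
def th (i : Fin (M + N)) : ℂ :=
  if (i : ℕ) < M + N / 2 then 1 else -1

/-- The conjugate index `ī`: `M+1-i` resp. `2M+N+1-i` in 1-indexed notation. -/
def bar (i : Fin (M + N)) : Fin (M + N) :=
  if _h : (i : ℕ) < M then ⟨M - 1 - (i : ℕ), by omega⟩
  else ⟨2 * M + N - 1 - (i : ℕ), by have := i.isLt; omega⟩

/-- Coefficient matrices of elements of the graded tensor square of `gl(M|N)`:
the entry at `((i,k),(j,l))` is the coefficient of `E_{ij} ⊗ E_{kl}`. -/
abbrev Mat := Matrix (Fin (M + N) × Fin (M + N)) (Fin (M + N) × Fin (M + N)) ℂ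

/-- Multiplication in the graded tensor product algebra:
`(A⊗B)(C⊗D) = (-1)^{[B][C]} AC ⊗ BD` on homogeneous elements. -/
def gmul (A B : Mat M N) : Mat M N := fun p q =>
  ∑ j : Fin (M + N), ∑ l : Fin (M + N),
    (-1 : ℂ) ^ ((gr M N θ₀ p.2 + gr M N θ₀ l) * (gr M N θ₀ j + gr M N θ₀ q.1)) *
      A p (j, l) * B (j, l) q

/-- The superpermutation `P = Σ_{i,j} (-1)^{[j]} E_{ij} ⊗ E_{ji}`. -/
def P : Mat M N := fun p q =>
  if p.1 = q.2 ∧ p.2 = q.1 then (-1 : ℂ) ^ gr M N θ₀ p.2 else 0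

/-- `K = Σ_{i,j} (-1)^{[i][j]} θ_i θ_j E_{j̄ ī} ⊗ E_{ji}`. -/
def K : Mat M N := fun p q =>
  if p.1 = bar M N p.2 ∧ q.1 = bar M N q.2 then
    (-1 : ℂ) ^ (gr M N θ₀ q.2 * gr M N θ₀ p.2) * th M N q.2 * th M N p.2
  else 0

section

variable {M N θ₀}

lemma bar_val_of_lt {i : Fin (M + N)} (h : (i : ℕ) < M) :
    (bar M N i : ℕ) = M - 1 - i := by
  simp [bar, h]

lemma bar_val_of_ge {i : Fin (M + N)} (h : M ≤ (i : ℕ)) :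
    (bar M N i : ℕ) = 2 * M + N - 1 - i := by
  simp [bar, not_lt.mpr h]

lemma bar_lt_iff (i : Fin (M + N)) : (bar M N i : ℕ) < M ↔ (i : ℕ) < M := by
  rcases lt_or_ge (i : ℕ) M with h | h
  · simp only [bar_val_of_lt h]; omega
  · simp only [bar_val_of_ge h]; omega

lemma bar_bar (i : Fin (M + N)) : bar M N (bar M N i) = i := by
  ext
  rcases lt_or_ge (i : ℕ) M with h | h
  · rw [bar_val_of_lt ((bar_lt_iff i).mpr h), bar_val_of_lt h]; omega
  · have hb : M ≤ (bar M N i : ℕ) := by rw [← not_lt, bar_lt_iff, not_lt]; exact h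
    rw [bar_val_of_ge hb, bar_val_of_ge h]; omega

lemma gr_bar (i : Fin (M + N)) : gr M N θ₀ (bar M N i) = gr M N θ₀ i := by
  simp only [gr, bar_lt_iff]

lemma neg_one_pow_gr_of_lt (hθ : θ₀ = 1 ∨ θ₀ = -1) {i : Fin (M + N)} (h : (i : ℕ) < M) :
    (-1 : ℂ) ^ gr M N θ₀ i = θ₀ := by
  rcases hθ with rfl | rfl <;> simp [gr, h]

lemma neg_one_pow_gr_of_ge (hθ : θ₀ = 1 ∨ θ₀ = -1) {i : Fin (M + N)} (h : M ≤ (i : ℕ)) :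
    (-1 : ℂ) ^ gr M N θ₀ i = -θ₀ := by
  rcases hθ with rfl | rfl <;> simp [gr, not_lt.mpr h]

lemma th_bar_of_lt {i : Fin (M + N)} (h : (i : ℕ) < M) : th M N (bar M N i) = th M N i := by
  have hb := bar_val_of_lt h
  simp only [th, if_pos (show (i : ℕ) < M + N / 2 by omega),
    if_pos (show (bar M N i : ℕ) < M + N / 2 by omega)]

/-- `bar` reverses the odd block `[M, M+N)`, exchanging its two halves when `N` is even. -/
lemma th_bar_of_ge (hN : Even N) {i : Fin (M + N)} (h : M ≤ (i : ℕ)) :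
    th M N (bar M N i) = -th M N i := by
  have hb := bar_val_of_ge h
  obtain ⟨n, rfl⟩ := hN
  have hi := i.isLt
  unfold th
  split_ifs <;> first | omega | norm_num

lemma neg_one_pow_gr_mul_th_bar (hθ : θ₀ = 1 ∨ θ₀ = -1) (hN : Even N) (i : Fin (M + N)) :
    (-1 : ℂ) ^ gr M N θ₀ i * th M N (bar M N i) = θ₀ * th M N i := by
  rcases lt_or_ge (i : ℕ) M with h | h
  · rw [neg_one_pow_gr_of_lt hθ h, th_bar_of_lt h]
  · rw [neg_one_pow_gr_of_ge hθ h, th_bar_of_ge hN h, neg_mul_neg]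

lemma gmul_P_apply (X : Mat M N) (p q : Fin (M + N) × Fin (M + N)) :
    gmul M N θ₀ (P M N θ₀) X p q =
      (-1 : ℂ) ^ ((gr M N θ₀ p.2 + gr M N θ₀ p.1) * (gr M N θ₀ p.2 + gr M N θ₀ q.1)) *
        (-1 : ℂ) ^ gr M N θ₀ p.2 * X (p.2, p.1) q := by
  simp [gmul, P, ite_and, eq_comm, Finset.sum_ite_eq']

lemma gmul_apply_P (X : Mat M N) (p q : Fin (M + N) × Fin (M + N)) :
    gmul M N θ₀ X (P M N θ₀) p q =
      (-1 : ℂ) ^ ((gr M N θ₀ p.2 + gr M N θ₀ q.1) * (gr M N θ₀ q.2 + gr M N θ₀ q.1)) *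
        X p (q.2, q.1) * (-1 : ℂ) ^ gr M N θ₀ q.1 := by
  simp [gmul, P, ite_and, Finset.sum_ite_eq']

lemma K_apply_comm (p q : Fin (M + N) × Fin (M + N)) : K M N θ₀ p q = K M N θ₀ q p := by
  simp only [K, and_comm]
  split_ifs <;> ring

lemma K_apply_of_ne_bar {p : Fin (M + N) × Fin (M + N)} (hp : p.1 ≠ bar M N p.2)
    (q : Fin (M + N) × Fin (M + N)) : K M N θ₀ p q = 0 :=
  if_neg (not_and_of_not_left _ hp)

lemma neg_one_pow_gr_mul_K_swap (hθ : θ₀ = 1 ∨ θ₀ = -1) (hN : Even N)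
    {p : Fin (M + N) × Fin (M + N)} (hp : p.1 = bar M N p.2) (q : Fin (M + N) × Fin (M + N)) :
    (-1 : ℂ) ^ gr M N θ₀ p.2 * K M N θ₀ (p.2, p.1) q = θ₀ * K M N θ₀ p q := by
  obtain ⟨a, b⟩ := p
  obtain rfl : a = bar M N b := hp
  have hkey := neg_one_pow_gr_mul_th_bar hθ hN b
  simp only [K, bar_bar, gr_bar, true_and]
  split_ifs
  · linear_combination (-1 : ℂ) ^ (gr M N θ₀ q.2 * gr M N θ₀ b) * th M N q.2 * hkey
  · simp

theorem P_mul_K (hθ : θ₀ = 1 ∨ θ₀ = -1) (hN : Even N) :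
    gmul M N θ₀ (P M N θ₀) (K M N θ₀) = (θ₀ : ℂ) • K M N θ₀ := by
  ext p q
  rw [gmul_P_apply, Matrix.smul_apply, smul_eq_mul]
  by_cases hp : p.1 = bar M N p.2
  · have hgr : gr M N θ₀ p.1 = gr M N θ₀ p.2 := by rw [hp, gr_bar]
    rw [hgr, Even.neg_one_pow ((Even.add_self _).mul_right _), one_mul,
      neg_one_pow_gr_mul_K_swap hθ hN hp]
  · have hp' : p.2 ≠ bar M N p.1 := fun h ↦ hp (by rw [h, bar_bar])
    simp [K_apply_of_ne_bar hp, K_apply_of_ne_bar (p := (p.2, p.1)) hp']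

theorem K_mul_P (hθ : θ₀ = 1 ∨ θ₀ = -1) (hN : Even N) :
    gmul M N θ₀ (K M N θ₀) (P M N θ₀) = (θ₀ : ℂ) • K M N θ₀ := by
  ext p q
  rw [gmul_apply_P, Matrix.smul_apply, smul_eq_mul, K_apply_comm p, K_apply_comm p]
  by_cases hq : q.1 = bar M N q.2
  · have hgr : gr M N θ₀ q.1 = gr M N θ₀ q.2 := by rw [hq, gr_bar]
    rw [hgr, Even.neg_one_pow ((Even.add_self _).mul_left _), one_mul, mul_comm,
      neg_one_pow_gr_mul_K_swap hθ hN hq]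
  · have hq' : q.2 ≠ bar M N q.1 := fun h ↦ hq (by rw [h, bar_bar])
    simp [K_apply_of_ne_bar hq, K_apply_of_ne_bar (p := (q.2, q.1)) hq']

end

/-- `PK = KP = θ₀ K` in the graded tensor product algebra. -/
theorem statement1 (hθ : θ₀ = 1 ∨ θ₀ = -1) (hN : Even N) :
    gmul M N θ₀ (P M N θ₀) (K M N θ₀) = gmul M N θ₀ (K M N θ₀) (P M N θ₀) ∧
    gmul M N θ₀ (P M N θ₀) (K M N θ₀) = (θ₀ : ℂ) • K M N θ₀ :=
  ⟨(P_mul_K hθ hN).trans (K_mul_P hθ hN).symm, P_mul_K hθ hN⟩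

end OspYangian
end
end

section
/- Specializing to N = 0, θ₀ = 1 (the so(M) case), the matrix R(u) = I + P/u − K/(u+κ) with P = Σ E_{ij}⊗E_{ji}, K = Σ E_{ij}⊗E_{īȷ̄} (ī = M+1−i), and κ = (M−2)/2 satisfies the ordinary Yang–Baxter equation R₁₂(u)R₁₃(u+v)R₂₃(v) = R₂₃(v)R₁₃(u+v)R₁₂(u) on (ℂ^M)^{⊗3}. -/
/-!
Inside `(ℂ^M)^{⊗3}` each `K_{ab}` factors as `U_c U_cᵀ`, where `c` is the remaining tensor slot and
`U_c : ℂ^M → (ℂ^M)^{⊗3}` places the invariant vector `ω = Σ_i e_i ⊗ e_ī` in slots `a, b`.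
Permuting the slots permutes the `U_c`, and `U_cᵀ U_d` is `M • 1` for `c = d` and `1` otherwise.
So all products of the `P_{ab}` and `K_{ab}` stay in the span of the six slot permutations and
the nine matrices `U_c U_dᵀ` (the Brauer algebra `B₃`), with explicit structure constants.
After clearing denominators, both sides of the Yang–Baxter equation expand in these fifteen
elements, and the coefficients agree as polynomials in `u, v, κ` once `M = 2κ + 2`.
-/

open Matrix BigOperators Finset

noncomputable section

namespace SoYangian

variable (M : ℕ)

/-- Conjugate index `ī = M+1-i` (0-indexed: `M-1-i`). -/
def baro (i : Fin M) : Fin M := ⟨M - 1 - (i : ℕ), by have := i.isLt; omega⟩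

/-- The permutation operator `P = Σ_{i,j} E_{ij} ⊗ E_{ji}` on `ℂ^M ⊗ ℂ^M`. -/
def Po : Matrix (Fin M × Fin M) (Fin M × Fin M) ℂ := fun p q =>
  if p.1 = q.2 ∧ p.2 = q.1 then 1 else 0

/-- `K = Σ_{i,j} E_{j̄ ī} ⊗ E_{ji} = Σ_{i,j} E_{ij} ⊗ E_{ī ȷ̄}` on `ℂ^M ⊗ ℂ^M`. -/
def Ko : Matrix (Fin M × Fin M) (Fin M × Fin M) ℂ := fun p q =>
  if p.1 = baro M p.2 ∧ q.1 = baro M q.2 then 1 else 0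

/-- `κ = (M-2)/2`. -/
def kapo : ℂ := ((M : ℂ) - 2) / 2

/-- The rational R-matrix `R(u) = I + P/u - K/(u+κ)` in the `so(M)` case. -/
def Ro (u : ℂ) : Matrix (Fin M × Fin M) (Fin M × Fin M) ℂ :=
  1 + u⁻¹ • Po M - (u + kapo M)⁻¹ • Ko M

/-- Embedding `X ↦ X₁₂` into the triple tensor product (ordinary, ungraded). -/
def e12 (X : Matrix (Fin M × Fin M) (Fin M × Fin M) ℂ) :
    Matrix (Fin M × Fin M × Fin M) (Fin M × Fin M × Fin M) ℂ := fun p q =>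
  if p.2.2 = q.2.2 then X (p.1, p.2.1) (q.1, q.2.1) else 0

/-- Embedding `X ↦ X₁₃`. -/
def e13 (X : Matrix (Fin M × Fin M) (Fin M × Fin M) ℂ) :
    Matrix (Fin M × Fin M × Fin M) (Fin M × Fin M × Fin M) ℂ := fun p q =>
  if p.2.1 = q.2.1 then X (p.1, p.2.2) (q.1, q.2.2) else 0

/-- Embedding `X ↦ X₂₃`. -/
def e23 (X : Matrix (Fin M × Fin M) (Fin M × Fin M) ℂ) :
    Matrix (Fin M × Fin M × Fin M) (Fin M × Fin M × Fin M) ℂ := fun p q =>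
  if p.1 = q.1 then X p.2 q.2 else 0

open Function

section Brauer

variable {n : Type*} [Fintype n] [DecidableEq n] {R : Type*} [CommRing R]

def slot (p : n × n × n) : Fin 3 → n := ![p.1, p.2.1, p.2.2]

omit [Fintype n] [DecidableEq n] in
lemma slot_zero (p : n × n × n) : slot p 0 = p.1 := rfl

omit [Fintype n] [DecidableEq n] in
lemma slot_one (p : n × n × n) : slot p 1 = p.2.1 := rfl

omit [Fintype n] [DecidableEq n] in
lemma slot_two (p : n × n × n) : slot p 2 = p.2.2 := rfl

omit [Fintype n] [DecidableEq n] in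
lemma eq_iff_slot_eq {p q : n × n × n} : p = q ↔ ∀ i, slot p i = slot q i :=
  ⟨by rintro rfl _; rfl, fun h => Prod.ext (h 0) (Prod.ext (h 1) (h 2))⟩

def permute (σ : Fin 3 → Fin 3) (p : n × n × n) : n × n × n :=
  (slot p (σ 0), slot p (σ 1), slot p (σ 2))

omit [Fintype n] [DecidableEq n] in
@[simp] lemma slot_permute (σ : Fin 3 → Fin 3) (p : n × n × n) (i : Fin 3) :
    slot (permute σ p) i = slot p (σ i) := by
  fin_cases i <;> rfl

-- Permutations of the three tensor factors: `P₁₂ = slotPerm n R ![1, 0, 2]`.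
variable (n R) in
def slotPerm (σ : Fin 3 → Fin 3) : Matrix (n × n × n) (n × n × n) R :=
  of fun p q => if q = permute σ p then 1 else 0

lemma slotPerm_mul {m : Type*} (σ : Fin 3 → Fin 3) (N : Matrix (n × n × n) m R) :
    slotPerm n R σ * N = N.submatrix (permute σ) id := by
  ext p q
  simp [slotPerm, mul_apply]

-- The product is written as a vector literal so that `simp` evaluates products of concrete
-- permutations to normal form.
lemma slotPerm_mul_slotPerm (σ τ : Fin 3 → Fin 3) :
    slotPerm n R σ * slotPerm n R τ = slotPerm n R ![σ (τ 0), σ (τ 1), σ (τ 2)] := by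
  have h (p : n × n × n) : permute τ (permute σ p) = permute ![σ (τ 0), σ (τ 1), σ (τ 2)] p := by
    refine eq_iff_slot_eq.2 fun i => ?_
    fin_cases i <;> simp
  rw [slotPerm_mul]
  ext p q
  simp [slotPerm, h]

omit [Fintype n] in
lemma transpose_slotPerm {σ : Fin 3 → Fin 3} (hσ : ∀ i, σ (σ i) = i) :
    (slotPerm n R σ)ᵀ = slotPerm n R σ := by
  have h (p q : n × n × n) : q = permute σ p → p = permute σ q := by
    rintro rfl
    exact eq_iff_slot_eq.2 fun i => by simp [hσ i]
  ext p q
  exact if_congr ⟨h q p, h p q⟩ rfl rfl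

lemma fin_three_shift_of_bijective {σ : Fin 3 → Fin 3} (hσ : Bijective σ) (c : Fin 3) :
    (σ (c + 1) = σ c + 1 ∧ σ (c + 2) = σ c + 2) ∨ (σ (c + 1) = σ c + 2 ∧ σ (c + 2) = σ c + 1) := by
  revert σ c
  decide

variable {bar : n → n}

-- `cup R bar c` is `U_c` for the form `ω = Σ_i e_{bar i} ⊗ e_i`, and `K₁₂ = cupCap R bar 2 2`.
variable (R bar) in
def cup (c : Fin 3) : Matrix (n × n × n) n R :=
  of fun p x => if slot p (c + 1) = bar (slot p (c + 2)) ∧ slot p c = x then 1 else 0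

omit [Fintype n] in
lemma cup_apply (c : Fin 3) (p : n × n × n) (x : n) :
    cup R bar c p x = if slot p (c + 1) = bar (slot p (c + 2)) ∧ slot p c = x then 1 else 0 :=
  rfl

omit [Fintype n] in
lemma cup_zero_apply (p : n × n × n) (x : n) :
    cup R bar 0 p x = if p.2.1 = bar p.2.2 ∧ p.1 = x then 1 else 0 := rfl

omit [Fintype n] in
lemma cup_one_apply (p : n × n × n) (x : n) :
    cup R bar 1 p x = if p.2.2 = bar p.1 ∧ p.2.1 = x then 1 else 0 := rfl

omit [Fintype n] in
lemma cup_two_apply (p : n × n × n) (x : n) :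
    cup R bar 2 p x = if p.1 = bar p.2.1 ∧ p.2.2 = x then 1 else 0 := rfl

variable (R bar) in
def cupCap (c d : Fin 3) : Matrix (n × n × n) (n × n × n) R := cup R bar c * (cup R bar d)ᵀ

omit [Fintype n] [DecidableEq n] in
lemma eq_apply_comm (hbar : Involutive bar) {a b : n} : a = bar b ↔ b = bar a :=
  eq_comm.trans hbar.eq_iff

lemma slotPerm_mul_cup (hbar : Involutive bar) {σ : Fin 3 → Fin 3} (hσ : Bijective σ) (c : Fin 3) :
    slotPerm n R σ * cup R bar c = cup R bar (σ c) := by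
  rw [slotPerm_mul]
  ext p x
  simp only [submatrix_apply, id, cup, of_apply, slot_permute]
  rcases fin_three_shift_of_bijective hσ c with ⟨h1, h2⟩ | ⟨h1, h2⟩ <;> rw [h1, h2]
  exact if_congr (and_congr_left' (eq_apply_comm hbar)) rfl rfl

lemma cup_transpose_mul_slotPerm (hbar : Involutive bar) {σ : Fin 3 → Fin 3} (hσ : ∀ i, σ (σ i) = i)
    (c : Fin 3) : (cup R bar c)ᵀ * slotPerm n R σ = (cup R bar (σ c))ᵀ := by
  rw [← transpose_slotPerm hσ, ← transpose_mul, slotPerm_mul_cup hbar (Involutive.bijective hσ)]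

lemma sum_ite_eq_apply_involutive (hbar : Involutive bar) (a : n) (f : n → R) :
    ∑ e, (if a = bar e then f e else 0) = f (bar a) := by
  simp_rw [← hbar.eq_iff (x := a), Finset.sum_ite_eq, Finset.mem_univ, if_true]

lemma cup_transpose_mul_cup (hbar : Involutive bar) (c d : Fin 3) :
    (cup R bar c)ᵀ * cup R bar d = (if c = d then (Fintype.card n : R) else 1) • 1 := by
  have h3 : ∀ i : Fin 3, i = 0 ∨ i = 1 ∨ i = 2 := by decide
  obtain rfl | rfl | rfl := h3 c <;> obtain rfl | rfl | rfl := h3 d <;> ext x y <;>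
    simp only [mul_apply, transpose_apply, cup_zero_apply, cup_one_apply, cup_two_apply,
      Matrix.smul_apply, one_apply, smul_eq_mul, ite_mul, one_mul, zero_mul, Fintype.sum_prod_type,
      ite_and] <;>
    simp [sum_ite_eq_apply_involutive hbar, Finset.sum_ite_irrel, Finset.sum_ite_eq,
      Finset.sum_ite_eq', hbar _, hbar.injective.eq_iff, apply_ite Finset.card]

lemma slotPerm_mul_cupCap (hbar : Involutive bar) {σ : Fin 3 → Fin 3} (hσ : Bijective σ)
    (c d : Fin 3) : slotPerm n R σ * cupCap R bar c d = cupCap R bar (σ c) d := by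
  rw [cupCap, ← Matrix.mul_assoc, slotPerm_mul_cup hbar hσ, cupCap]

lemma cupCap_mul_slotPerm (hbar : Involutive bar) {σ : Fin 3 → Fin 3} (hσ : ∀ i, σ (σ i) = i)
    (c d : Fin 3) : cupCap R bar c d * slotPerm n R σ = cupCap R bar c (σ d) := by
  rw [cupCap, Matrix.mul_assoc, cup_transpose_mul_slotPerm hbar hσ, cupCap]

lemma cupCap_mul_cupCap (hbar : Involutive bar) (c d d' e : Fin 3) :
    cupCap R bar c d * cupCap R bar d' e =
      (if d = d' then (Fintype.card n : R) else 1) • cupCap R bar c e := by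
  rw [cupCap, cupCap, Matrix.mul_assoc, ← Matrix.mul_assoc (cup R bar d)ᵀ,
    cup_transpose_mul_cup hbar, smul_mul, Matrix.one_mul, Matrix.mul_smul, cupCap]

lemma cupCap_apply (c d : Fin 3) (p q : n × n × n) :
    cupCap R bar c d p q = if slot p (c + 1) = bar (slot p (c + 2)) ∧
      slot q (d + 1) = bar (slot q (d + 2)) ∧ slot p c = slot q d then 1 else 0 := by
  simp only [cupCap, mul_apply, transpose_apply, cup_apply, ite_and, mul_ite, ite_mul, one_mul,
    zero_mul, mul_zero]
  simp only [Finset.sum_ite_irrel, Finset.sum_const_zero, Finset.sum_ite_eq, Finset.mem_univ,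
    if_true]
  split_ifs <;> simp_all

variable (bar) in
def rMatrixPoly (κ : R) (σ : Fin 3 → Fin 3) (c : Fin 3) (u : R) :
    Matrix (n × n × n) (n × n × n) R :=
  (u * (u + κ)) • 1 + (u + κ) • slotPerm n R σ - u • cupCap R bar c c

theorem yangBaxter_rMatrixPoly (hbar : Involutive bar) {κ : R}
    (hκ : (Fintype.card n : R) = 2 * κ + 2) (u v : R) :
    rMatrixPoly bar κ ![1, 0, 2] 2 u * rMatrixPoly bar κ ![2, 1, 0] 1 (u + v) *
        rMatrixPoly bar κ ![0, 2, 1] 0 v =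
      rMatrixPoly bar κ ![0, 2, 1] 0 v * rMatrixPoly bar κ ![2, 1, 0] 1 (u + v) *
        rMatrixPoly bar κ ![1, 0, 2] 2 u := by
  -- `decide` discharges the bijectivity and involutivity of the literal permutations.
  simp (disch := decide) only [rMatrixPoly, add_mul, mul_add, sub_mul, mul_sub, smul_mul_assoc,
    mul_smul_comm, smul_smul, one_mul, mul_one, one_smul, slotPerm_mul_slotPerm,
    slotPerm_mul_cupCap hbar, cupCap_mul_slotPerm hbar, cupCap_mul_cupCap hbar, Matrix.cons_val,
    Fin.isValue, Fin.reduceEq, if_true, if_false, hκ]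
  match_scalars <;> ring

section Field

variable {K : Type*} [Field K]

variable (bar) in
def rMatrix (κ : K) (σ : Fin 3 → Fin 3) (c : Fin 3) (u : K) : Matrix (n × n × n) (n × n × n) K :=
  1 + u⁻¹ • slotPerm n K σ - (u + κ)⁻¹ • cupCap K bar c c

lemma rMatrix_eq_smul_rMatrixPoly {κ u : K} (hu : u ≠ 0) (huκ : u + κ ≠ 0)
    (σ : Fin 3 → Fin 3) (c : Fin 3) :
    rMatrix bar κ σ c u = (u * (u + κ))⁻¹ • rMatrixPoly bar κ σ c u := by
  rw [rMatrix, rMatrixPoly, smul_sub, smul_add, smul_smul, smul_smul, smul_smul,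
    inv_mul_cancel₀ (mul_ne_zero hu huκ), one_smul]
  congr 3 <;> field_simp

theorem yangBaxter_rMatrix (hbar : Involutive bar) {κ : K}
    (hκ : (Fintype.card n : K) = 2 * κ + 2) {u v : K} (hu : u ≠ 0) (hv : v ≠ 0)
    (huv : u + v ≠ 0) (huκ : u + κ ≠ 0) (hvκ : v + κ ≠ 0) (huvκ : u + v + κ ≠ 0) :
    rMatrix bar κ ![1, 0, 2] 2 u * rMatrix bar κ ![2, 1, 0] 1 (u + v) *
        rMatrix bar κ ![0, 2, 1] 0 v =
      rMatrix bar κ ![0, 2, 1] 0 v * rMatrix bar κ ![2, 1, 0] 1 (u + v) *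
        rMatrix bar κ ![1, 0, 2] 2 u := by
  simp only [rMatrix_eq_smul_rMatrixPoly hu huκ, rMatrix_eq_smul_rMatrixPoly hv hvκ,
    rMatrix_eq_smul_rMatrixPoly huv huvκ, smul_mul_smul_comm, yangBaxter_rMatrixPoly hbar hκ]
  congr 1
  ring

end Field

end Brauer

lemma baro_involutive : Involutive (baro M) := by
  intro i
  simp only [baro, Fin.ext_iff]
  omega

lemma card_fin_eq_two_mul_kapo_add_two : (Fintype.card (Fin M) : ℂ) = 2 * kapo M + 2 := by
  rw [Fintype.card_fin, kapo]
  ring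

lemma e12_Ro (u : ℂ) : e12 M (Ro M u) = rMatrix (baro M) (kapo M) ![1, 0, 2] 2 u := by
  ext p q
  simp only [e12, Ro, rMatrix, Matrix.sub_apply, Matrix.add_apply, Matrix.smul_apply, one_apply,
    Po, Ko, slotPerm, permute, of_apply, cupCap_apply, smul_eq_mul, Prod.ext_iff, Matrix.cons_val,
    Fin.isValue, Fin.reduceAdd, slot_zero, slot_one, slot_two]
  by_cases h : p.2.2 = q.2.2 <;> simp [h, eq_comm, and_comm]

lemma e13_Ro (u : ℂ) : e13 M (Ro M u) = rMatrix (baro M) (kapo M) ![2, 1, 0] 1 u := by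
  ext p q
  simp only [e13, Ro, rMatrix, Matrix.sub_apply, Matrix.add_apply, Matrix.smul_apply, one_apply,
    Po, Ko, slotPerm, permute, of_apply, cupCap_apply, smul_eq_mul, Prod.ext_iff, Matrix.cons_val,
    Fin.isValue, Fin.reduceAdd, slot_zero, slot_one, slot_two]
  simp only [eq_apply_comm (baro_involutive M) (a := p.2.2),
    eq_apply_comm (baro_involutive M) (a := q.2.2)]
  by_cases h : p.2.1 = q.2.1 <;> simp [h, eq_comm, and_comm]

lemma e23_Ro (u : ℂ) : e23 M (Ro M u) = rMatrix (baro M) (kapo M) ![0, 2, 1] 0 u := by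
  ext p q
  simp only [e23, Ro, rMatrix, Matrix.sub_apply, Matrix.add_apply, Matrix.smul_apply, one_apply,
    Po, Ko, slotPerm, permute, of_apply, cupCap_apply, smul_eq_mul, Prod.ext_iff, Matrix.cons_val,
    Fin.isValue, Fin.reduceAdd, slot_zero, slot_one, slot_two]
  by_cases h : p.1 = q.1 <;> simp [h, eq_comm, and_comm]

/-- the ordinary Yang–Baxter equation
`R₁₂(u) R₁₃(u+v) R₂₃(v) = R₂₃(v) R₁₃(u+v) R₁₂(u)` for the `so(M)` R-matrix
`R(u) = I + P/u - K/(u+κ)`, `κ = (M-2)/2`, on `(ℂ^M)^{⊗3}`. -/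
theorem statement12 (u v : ℂ) (hu : u ≠ 0) (hv : v ≠ 0) (huv : u + v ≠ 0)
    (huk : u + kapo M ≠ 0) (hvk : v + kapo M ≠ 0) (huvk : u + v + kapo M ≠ 0) :
    e12 M (Ro M u) * e13 M (Ro M (u + v)) * e23 M (Ro M v) =
      e23 M (Ro M v) * e13 M (Ro M (u + v)) * e12 M (Ro M u) := by
  rw [e12_Ro, e13_Ro, e23_Ro]
  exact yangBaxter_rMatrix (baro_involutive M) (card_fin_eq_two_mul_kapo_add_two M) hu hv huv huk
    hvk huvk
end SoYangian
end
end

section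
/- In the ungraded orthogonal case (N = 0, θ₀ = 1), the R-matrix satisfies crossing unitarity combined with unitarity: R(u)R(−u) = (1 − 1/u²)I, where R(u) = I + P/u − K/(u+κ), κ = (M−2)/2, P the permutation on ℂ^M⊗ℂ^M and K = Σ E_{j̄ ī}⊗E_{ji} with ī = M+1−i. -/
/-! Only the relations `P² = 1`, `PK = KP = K`, `K² = MK` enter: expanding `R(u)R(-u)` with them
leaves a combination of `1`, `P`, `K` in which the `P`-coefficient `1/u - 1/u` vanishes and the
`K`-coefficient vanishes precisely because `M = 2κ + 2`. -/

open Matrix BigOperators Finset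

noncomputable section

namespace SoYangian

variable (M : ℕ)

theorem unitarity_of_relations {𝕜 A : Type*} [Field 𝕜] [Ring A] [Algebra 𝕜 A] {P K : A}
    {m κ : 𝕜} (hPP : P * P = 1) (hPK : P * K = K) (hKP : K * P = K) (hKK : K * K = m • K)
    (hm : m = 2 * κ + 2) {u : 𝕜} (hu : u ≠ 0) (hplus : u + κ ≠ 0) (hminus : -u + κ ≠ 0) :
    (1 + u⁻¹ • P - (u + κ)⁻¹ • K) * (1 + (-u)⁻¹ • P - (-u + κ)⁻¹ • K)
      = (1 - 1 / u ^ 2) • (1 : A) := by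
  subst hm
  simp only [add_mul, sub_mul, mul_add, mul_sub, one_mul, mul_one, smul_mul_assoc,
    mul_smul_comm, hPP, hPK, hKP, hKK, smul_smul]
  match_scalars <;> field_simp <;> ring

lemma baro_baro (i : Fin M) : baro M (baro M i) = i := by
  have := i.isLt
  ext
  simp only [baro]
  omega

lemma eq_baro_comm (i j : Fin M) : i = baro M j ↔ j = baro M i := by
  constructor <;> rintro rfl <;> rw [baro_baro]

lemma Po_mul_Po : Po M * Po M = 1 := by
  ext p q
  rw [Matrix.mul_apply, Finset.sum_eq_single (p.2, p.1)]
  · simp [Po, Matrix.one_apply, Prod.ext_iff, and_comm]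
  · rintro ⟨r1, r2⟩ - hr
    simp only [Po]
    rw [if_neg]
    · simp
    · rintro ⟨rfl, rfl⟩; exact hr rfl
  · simp

lemma Po_mul_Ko : Po M * Ko M = Ko M := by
  ext p q
  rw [Matrix.mul_apply, Finset.sum_eq_single (p.2, p.1)]
  · simp [Po, Ko, eq_baro_comm M p.2 p.1]
  · rintro ⟨r1, r2⟩ - hr
    simp only [Po]
    rw [if_neg]
    · simp
    · rintro ⟨rfl, rfl⟩; exact hr rfl
  · simp

lemma Ko_mul_Po : Ko M * Po M = Ko M := by
  ext p q
  rw [Matrix.mul_apply, Finset.sum_eq_single (q.2, q.1)]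
  · simp [Po, Ko, eq_baro_comm M q.2 q.1]
  · rintro ⟨r1, r2⟩ - hr
    simp only [Po]
    rw [if_neg, mul_zero]
    rintro ⟨rfl, rfl⟩; exact hr rfl
  · simp

lemma Ko_mul_Ko : Ko M * Ko M = (M : ℂ) • Ko M := by
  ext p q
  rw [Matrix.mul_apply]
  simp only [Ko, Matrix.smul_apply, smul_eq_mul, Fintype.sum_prod_type]
  by_cases hp : p.1 = baro M p.2 <;> by_cases hq : q.1 = baro M q.2 <;>
    simp [hp, hq, eq_baro_comm, Finset.sum_ite_eq']

theorem statement18 (u : ℂ) (hu : u ≠ 0)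
    (huk : u ≠ kapo M) (huk' : u ≠ -kapo M) :
    Ro M u * Ro M (-u) = (1 - 1 / u ^ 2) • (1 : Matrix (Fin M × Fin M) (Fin M × Fin M) ℂ) := by
  have hplus : u + kapo M ≠ 0 := fun h => huk' (by linear_combination h)
  have hminus : -u + kapo M ≠ 0 := fun h => huk (by linear_combination -h)
  exact unitarity_of_relations (Po_mul_Po M) (Po_mul_Ko M) (Ko_mul_Po M) (Ko_mul_Ko M)
    (by unfold kapo; ring) hu hplus hminus
end SoYangian
end
end
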